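/- For all integers m ≥ 2 and n ≥ 0, the bondage number of the strong product of the complete graph K_m and the star K_{1,n} satisfies b(K_m ⊠ K_{1,n}) ≥ ⌈m/2⌉. -/
import Mathlib


open SimpleGraph Finset

/-- `D` is a dominating set of `G`: every vertex is in `D` or adjacent to a vertex of `D`. -/
def SimpleGraph.IsDominatingSet {V : Type*} (G : SimpleGraph V) (D : Set V) : Prop :=
  ∀ v : V, v ∈ D ∨ ∃ u ∈ D, G.Adj u v

/-- The domination number of a finite graph. -/
noncomputable def SimpleGraph.dominationNumber {V : Type*} [Fintype V]
    (G : SimpleGraph V) : ℕ :=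
  sInf {k | ∃ D : Finset V, D.card = k ∧ G.IsDominatingSet ↑D}

/-- The bondage number of a finite graph: the least size of a set of edges whose removal
increases the domination number. -/
noncomputable def SimpleGraph.bondageNumber {V : Type*} [Fintype V]
    (G : SimpleGraph V) : ℕ :=
  sInf {k | ∃ Z : Finset (Sym2 V), Z.card = k ∧ (↑Z : Set (Sym2 V)) ⊆ G.edgeSet ∧
    G.dominationNumber < (G.deleteEdges ↑Z).dominationNumber}

/-- The strong product of two simple graphs. -/
def SimpleGraph.strongProd {V W : Type*} (G : SimpleGraph V) (H : SimpleGraph W) :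
    SimpleGraph (V × W) :=
  SimpleGraph.fromRel (fun a b =>
    (a.1 = b.1 ∧ H.Adj a.2 b.2) ∨ (G.Adj a.1 b.1 ∧ a.2 = b.2) ∨
      (G.Adj a.1 b.1 ∧ H.Adj a.2 b.2))

infixl:70 " ⊠ " => SimpleGraph.strongProd

/-- **Lemma.** For all `m ≥ 2` and `n ≥ 0`, `b(K_m ⊠ K_{1,n}) ≥ ⌈m/2⌉`. -/
theorem bondage_strongProd_complete_star_ge (m n : ℕ) (hm : 2 ≤ m) :
    (m + 1) / 2 ≤
      ((⊤ : SimpleGraph (Fin m)) ⊠ completeBipartiteGraph (Fin 1) (Fin n)).bondageNumber := by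
  classical
  set G := (⊤ : SimpleGraph (Fin m)) ⊠ completeBipartiteGraph (Fin 1) (Fin n) with hG
  set c : Fin 1 ⊕ Fin n := Sum.inl 0 with hc
  -- any center vertex is adjacent to every other vertex
  have hadj : ∀ (i : Fin m) (v : Fin m × (Fin 1 ⊕ Fin n)), v ≠ (i, c) → G.Adj (i, c) v := by
    rintro i ⟨j, x⟩ hne
    rw [hG, SimpleGraph.strongProd, SimpleGraph.fromRel_adj]
    refine ⟨fun h => hne h.symm, Or.inl ?_⟩
    by_cases hij : i = j
    · subst hij
      refine Or.inl ⟨rfl, ?_⟩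
      rcases x with y | y
      · exact absurd (by rw [hc]; exact congrArg _ (congrArg _ (Subsingleton.elim y 0))) hne
      · simp [hc]
    · rcases x with y | y
      · refine Or.inr (Or.inl ⟨by simpa using hij, ?_⟩)
        rw [hc]; exact congrArg Sum.inl (Subsingleton.elim 0 y)
      · exact Or.inr (Or.inr ⟨by simpa using hij, by simp [hc]⟩)
  -- a singleton center dominates whenever no deleted edge touches it
  have hdom : ∀ (i : Fin m) (Z : Finset (Sym2 (Fin m × (Fin 1 ⊕ Fin n)))),
      (∀ e ∈ Z, (i, c) ∉ e) →
      (G.deleteEdges ↑Z).dominationNumber ≤ 1 := by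
    intro i Z hZ
    apply Nat.sInf_le
    refine ⟨{(i, c)}, Finset.card_singleton _, ?_⟩
    intro v
    by_cases hv : v = (i, c)
    · left; simp [hv]
    · right
      refine ⟨(i, c), by simp, ?_⟩
      rw [SimpleGraph.deleteEdges_adj]
      refine ⟨hadj i v hv, fun hmem => ?_⟩
      exact hZ _ (Finset.mem_coe.mp hmem) (Sym2.mem_mk_left _ _)
  set i0 : Fin m := ⟨0, by omega⟩ with hi0
  set i1 : Fin m := ⟨1, by omega⟩ with hi1
  have hv0 : i0 ≠ i1 := by simp [hi0, hi1, Fin.ext_iff]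
  -- domination number of G is at least 1
  have hγge : 1 ≤ G.dominationNumber := by
    refine le_csInf ⟨(Finset.univ : Finset (Fin m × (Fin 1 ⊕ Fin n))).card,
      Finset.univ, rfl, fun v => Or.inl (by simp)⟩ ?_
    rintro k ⟨D, rfl, hD⟩
    rcases hD (i0, c) with h | ⟨u, hu, -⟩
    · exact Finset.card_pos.mpr ⟨_, h⟩
    · exact Finset.card_pos.mpr ⟨_, hu⟩
  have hγle : G.dominationNumber ≤ 1 := by
    have := hdom i0 ∅ (by simp)
    simpa using this
  -- the bondage set is nonempty: deleting all edges works
  have hne : {k | ∃ Z : Finset (Sym2 (Fin m × (Fin 1 ⊕ Fin n))), Z.card = k ∧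
      (↑Z : Set (Sym2 (Fin m × (Fin 1 ⊕ Fin n)))) ⊆ G.edgeSet ∧
      G.dominationNumber < (G.deleteEdges ↑Z).dominationNumber}.Nonempty := by
    refine ⟨G.edgeFinset.card, G.edgeFinset, rfl, by rw [SimpleGraph.coe_edgeFinset], ?_⟩
    have h2 : 2 ≤ (G.deleteEdges ↑G.edgeFinset).dominationNumber := by
      refine le_csInf ⟨(Finset.univ : Finset (Fin m × (Fin 1 ⊕ Fin n))).card,
        Finset.univ, rfl, fun v => Or.inl (by simp)⟩ ?_
      rintro k ⟨D, rfl, hD⟩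
      have hall : ∀ v : Fin m × (Fin 1 ⊕ Fin n), v ∈ D := by
        intro v
        rcases hD v with h | ⟨u, hu, hadj'⟩
        · exact h
        · rw [SimpleGraph.deleteEdges_adj, SimpleGraph.coe_edgeFinset] at hadj'
          exact absurd ((SimpleGraph.mem_edgeSet G).mpr hadj'.1) hadj'.2
      have hsub : ({(i0, c), (i1, c)} : Finset _) ⊆ D := by
        intro v hv
        simp at hv
        rcases hv with h | h <;> (subst h; exact hall _)
      calc 2 = ({(i0, c), (i1, c)} : Finset _).card := by
              rw [Finset.card_insert_of_notMem (by simp [hv0]), Finset.card_singleton]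
        _ ≤ D.card := Finset.card_le_card hsub
    omega
  refine le_csInf hne ?_
  rintro k ⟨Z, rfl, hZsub, hlt⟩
  by_contra hk
  push_neg at hk
  -- find a center untouched by Z
  set B : Finset (Fin m) := Z.biUnion (fun e => Finset.univ.filter (fun i => (i, c) ∈ e)) with hB
  have hBcard : B.card ≤ Z.card * 2 := by
    refine Finset.card_biUnion_le_card_mul _ _ _ ?_
    intro e he
    induction e using Sym2.ind with
    | _ a b =>
      have hsub : Finset.univ.filter (fun i => (i, c) ∈ s(a, b)) ⊆ {a.1, b.1} := by
        intro i hi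
        simp only [Finset.mem_filter, Sym2.mem_iff] at hi
        rcases hi.2 with h | h <;> simp [← h]
      exact (Finset.card_le_card hsub).trans ((Finset.card_insert_le _ _).trans (by simp))
  have hBlt : B.card < m := by omega
  obtain ⟨i, hi⟩ : ∃ i : Fin m, i ∉ B := by
    by_contra h
    push_neg at h
    have : B = Finset.univ := Finset.eq_univ_iff_forall.mpr h
    rw [this, Finset.card_univ, Fintype.card_fin] at hBlt
    omega
  have hi' : ∀ e ∈ Z, (i, c) ∉ e := by
    intro e he hmem
    exact hi (Finset.mem_biUnion.mpr ⟨e, he, Finset.mem_filter.mpr ⟨Finset.mem_univ _, hmem⟩⟩)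
  have := hdom i Z hi'
  omega
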